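/- A linear operator H on a finite-dimensional complex inner-product space with a complete set of eigenvectors has a real spectrum if and only if there exists a positive-definite operator η such that H†η = ηH. -/

import Mathlib

/-!
If the eigenvalues are real, the linear equivalence `A` sending the eigenbasis to an orthonormal
basis conjugates `H` to an operator `S` that is diagonal with real entries in an orthonormal basis,
hence symmetric; then `η = A†A` satisfies `H†η = A†SA = ηH`, and it is positive definite because
`⟪v, ηv⟫ = ‖Av‖²`. Conversely, for an eigenvector `v` with eigenvalue `μ`, `⟪v, ηHv⟫ = ⟪v, H†ηv⟫`
equals both `μ⟪v, ηv⟫` and `conj μ ⟪v, ηv⟫`, and `⟪v, ηv⟫ ≠ 0`.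
-/

open LinearMap Module ComplexConjugate

namespace LinearMap

variable {𝕜 E F : Type*} [RCLike 𝕜] [NormedAddCommGroup E] [InnerProductSpace 𝕜 E]
  [NormedAddCommGroup F] [InnerProductSpace 𝕜 F]

theorem isSymmetric_of_orthonormalBasis_apply_eq_smul [FiniteDimensional 𝕜 E] {ι : Type*}
    [Fintype ι] {S : E →ₗ[𝕜] E} (e : OrthonormalBasis ι 𝕜 E) {μ : ι → 𝕜}
    (hμ : ∀ i, conj (μ i) = μ i) (hS : ∀ i, S (e i) = μ i • e i) : S.IsSymmetric := by
  classical
  rw [isSymmetric_iff_isSelfAdjoint, IsSelfAdjoint, star_eq_adjoint, eq_comm,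
    eq_adjoint_iff_basis e.toBasis e.toBasis]
  intro i j
  simp only [OrthonormalBasis.coe_toBasis, hS, inner_smul_left, inner_smul_right, e.inner_eq_ite]
  split_ifs with hij
  · rw [hij, hμ]
  · simp

theorem exists_linearEquiv_comp_eq_isSymmetric_comp [FiniteDimensional 𝕜 E] {ι : Type*}
    [Fintype ι] (T : E →ₗ[𝕜] E) (b : Basis ι 𝕜 E) {μ : ι → 𝕜} (hμ : ∀ i, conj (μ i) = μ i)
    (hT : ∀ i, T (b i) = μ i • b i) :
    ∃ (A : E ≃ₗ[𝕜] E) (S : E →ₗ[𝕜] E), S.IsSymmetric ∧ A.toLinearMap ∘ₗ T = S ∘ₗ A := by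
  have hcard : Fintype.card (Fin (finrank 𝕜 E)) = Fintype.card ι := by
    rw [Fintype.card_fin, finrank_eq_card_basis b]
  let e : OrthonormalBasis ι 𝕜 E := (stdOrthonormalBasis 𝕜 E).reindex (Fintype.equivOfCardEq hcard)
  let A : E ≃ₗ[𝕜] E := b.equiv e.toBasis (Equiv.refl ι)
  have hAb : ∀ i, A (b i) = e i := fun i => by simp [A, Basis.equiv_apply]
  refine ⟨A, A.toLinearMap ∘ₗ T ∘ₗ A.symm.toLinearMap, ?_, ?_⟩
  · refine isSymmetric_of_orthonormalBasis_apply_eq_smul e hμ fun i => ?_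
    rw [comp_apply, comp_apply, LinearEquiv.coe_coe, LinearEquiv.coe_coe, ← hAb,
      A.symm_apply_apply, hT, map_smul, hAb]
  · ext v
    simp

theorem re_inner_adjoint_comp_self_pos [FiniteDimensional 𝕜 E] [FiniteDimensional 𝕜 F]
    {A : E →ₗ[𝕜] F} (hA : Function.Injective A) {v : E} (hv : v ≠ 0) :
    0 < RCLike.re (inner 𝕜 v ((adjoint A ∘ₗ A) v)) := by
  have hAv : A v ≠ 0 := (map_ne_zero_iff A hA).2 hv
  rw [comp_apply, adjoint_inner_right, inner_self_eq_norm_sq]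
  positivity

theorem adjoint_comp_adjoint_comp_self [FiniteDimensional 𝕜 E] [FiniteDimensional 𝕜 F]
    {A : E →ₗ[𝕜] F} {T : E →ₗ[𝕜] E} {S : F →ₗ[𝕜] F} (hS : S.IsSymmetric)
    (h : A ∘ₗ T = S ∘ₗ A) : adjoint T ∘ₗ (adjoint A ∘ₗ A) = (adjoint A ∘ₗ A) ∘ₗ T :=
  calc adjoint T ∘ₗ (adjoint A ∘ₗ A)
      = adjoint (A ∘ₗ T) ∘ₗ A := by rw [adjoint_comp, comp_assoc]
    _ = adjoint A ∘ₗ (S ∘ₗ A) := by rw [h, adjoint_comp, hS.adjoint_eq, comp_assoc]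
    _ = (adjoint A ∘ₗ A) ∘ₗ T := by rw [← h, comp_assoc]

theorem conj_eq_of_hasEigenvalue_of_adjoint_comp_eq [FiniteDimensional 𝕜 E]
    {T η : E →ₗ[𝕜] E} (hη : ∀ v, v ≠ 0 → 0 < RCLike.re (inner 𝕜 v (η v)))
    (h : adjoint T ∘ₗ η = η ∘ₗ T) {μ : 𝕜} (hμ : End.HasEigenvalue T μ) : conj μ = μ := by
  obtain ⟨v, hv⟩ := hμ.exists_hasEigenvector
  have hTv : T v = μ • v := hv.apply_eq_smul
  have hne : inner 𝕜 v (η v) ≠ 0 := fun h0 => by simpa [h0] using hη v hv.2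
  have hηT : η (T v) = adjoint T (η v) := (LinearMap.congr_fun h v).symm
  refine mul_right_cancel₀ hne ?_
  calc conj μ * inner 𝕜 v (η v) = inner 𝕜 v (adjoint T (η v)) := by
        rw [adjoint_inner_right, hTv, inner_smul_left]
    _ = μ * inner 𝕜 v (η v) := by rw [← hηT, hTv, map_smul, inner_smul_right]

end LinearMap

/-- A diagonalizable linear operator H on a finite-dimensional complex inner-product
space has a real spectrum iff there is a positive-definite operator η with H†η = ηH. -/
theorem stmt_4 {V : Type*} [NormedAddCommGroup V] [InnerProductSpace ℂ V]
    [FiniteDimensional ℂ V]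
    (H : V →ₗ[ℂ] V) {n : ℕ} (b : Module.Basis (Fin n) ℂ V)
    (hdiag : ∀ i, ∃ μ : ℂ, H (b i) = μ • b i) :
    (∀ μ : ℂ, Module.End.HasEigenvalue H μ → μ.im = 0) ↔
      ∃ η : V →ₗ[ℂ] V,
        (∀ v w : V, (inner ℂ (η v) w : ℂ) = inner ℂ v (η w)) ∧
        (∀ v : V, v ≠ 0 → 0 < (inner ℂ v (η v) : ℂ).re) ∧
        Function.Bijective η ∧
        (LinearMap.adjoint H) ∘ₗ η = η ∘ₗ H := by
  constructor
  · intro hreal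
    choose μ hμ using hdiag
    have hconj : ∀ i, conj (μ i) = μ i := fun i =>
      Complex.conj_eq_iff_im.2 <| hreal _ <|
        End.hasEigenvalue_of_hasEigenvector ⟨End.mem_eigenspace_iff.2 (hμ i), b.ne_zero i⟩
    obtain ⟨A, S, hS, hAH⟩ := exists_linearEquiv_comp_eq_isSymmetric_comp H b hconj hμ
    have hinj : Function.Injective (adjoint (A : V →ₗ[ℂ] V) ∘ₗ (A : V →ₗ[ℂ] V)) := by
      rw [← ker_eq_bot, ker_adjoint_comp_self, ker_eq_bot]
      exact A.injective
    exact ⟨adjoint (A : V →ₗ[ℂ] V) ∘ₗ (A : V →ₗ[ℂ] V), isSymmetric_adjoint_comp_self _,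
      fun v hv => re_inner_adjoint_comp_self_pos A.injective hv,
      ⟨hinj, injective_iff_surjective.1 hinj⟩, adjoint_comp_adjoint_comp_self hS hAH⟩
  · rintro ⟨η, -, hpos, -, hcomm⟩ μ hμ
    exact Complex.conj_eq_iff_im.1 (conj_eq_of_hasEigenvalue_of_adjoint_comp_eq hpos hcomm hμ)
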